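/- Ekeland's variational principle: Let (V, d) be a complete metric space and F: V → ℝ a continuous function bounded below. Given θ > 0 and v₀ ∈ V with F(v₀) ≤ inf_{v∈V} F(v) + θ, there exists v_θ ∈ V such that F(v_θ) ≤ F(v₀), d(v_θ, v₀) ≤ √θ, and for all v ∈ V, F(v) - F(v_θ) ≥ -√θ · d(v_θ, v). -/
import Mathlib

theorem stmt_4 {V : Type*} [MetricSpace V] [CompleteSpace V]
    (F : V → ℝ) (hF : Continuous F) (hbd : BddBelow (Set.range F))
    (θ : ℝ) (hθ : 0 < θ) (v₀ : V) (hv₀ : F v₀ ≤ (⨅ v, F v) + θ) :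
    ∃ vθ : V, F vθ ≤ F v₀ ∧ dist vθ v₀ ≤ Real.sqrt θ ∧
      ∀ v : V, -(Real.sqrt θ * dist vθ v) ≤ F v - F vθ := by
  set l : ℝ := Real.sqrt θ with hl
  have hl0 : 0 < l := Real.sqrt_pos.mpr hθ
  set S : V → Set V := fun x => {w | F w + l * dist w x ≤ F x} with hS
  have hmem : ∀ x, x ∈ S x := by
    intro x; simp [hS]
  have htrans : ∀ x w y, w ∈ S x → y ∈ S w → y ∈ S x := by
    intro x w y hw hy
    simp only [hS, Set.mem_setOf_eq] at hw hy ⊢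
    have : F y + l * dist y x ≤ F y + l * (dist y w + dist w x) := by
      nlinarith [dist_triangle y w x, hl0.le]
    calc F y + l * dist y x ≤ F y + l * (dist y w + dist w x) := this
      _ = (F y + l * dist y w) + l * dist w x := by ring
      _ ≤ F w + l * dist w x := by linarith [hy]
      _ ≤ F x := hw
  have hne : ∀ x, (F '' S x).Nonempty := fun x => ⟨F x, x, hmem x, rfl⟩
  have hbdd : ∀ x, BddBelow (F '' S x) :=
    fun x => hbd.mono (Set.image_subset_range F _)
  -- choose next points
  have hchoice : ∀ n : ℕ, ∀ x : V, ∃ w ∈ S x,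
      F w < sInf (F '' S x) + (1/2 : ℝ) ^ n := by
    intro n x
    obtain ⟨a, ⟨w, hw, rfl⟩, ha⟩ := Real.lt_sInf_add_pos (hne x)
      (by positivity : (0:ℝ) < (1/2 : ℝ) ^ n)
    exact ⟨w, hw, ha⟩
  choose next hnext1 hnext2 using hchoice
  let u : ℕ → V := fun n => Nat.rec v₀ (fun n x => next n x) n
  have hu0 : u 0 = v₀ := rfl
  have husucc : ∀ n, u (n+1) = next n (u n) := fun n => rfl
  have hstep : ∀ n, u (n+1) ∈ S (u n) := fun n => hnext1 n (u n)
  have hchain : ∀ n m, n ≤ m → u m ∈ S (u n) := by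
    intro n m hnm
    induction m with
    | zero => rw [Nat.le_zero.mp hnm]; exact hmem _
    | succ k ih =>
      rcases Nat.lt_or_ge n (k+1) with h | h
      · exact htrans _ _ _ (ih (Nat.lt_succ_iff.mp h)) (hstep k)
      · have : n = k + 1 := le_antisymm hnm h
        rw [this]; exact hmem _
  have hanti : ∀ n m, n ≤ m → F (u m) ≤ F (u n) := by
    intro n m hnm
    have := hchain n m hnm
    simp only [hS, Set.mem_setOf_eq] at this
    nlinarith [dist_nonneg (x := u m) (y := u n), hl0.le, this]
  -- F (u n) converges
  have hbdu : BddBelow (Set.range (fun n => F (u n))) :=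
    hbd.mono (by rintro x ⟨n, rfl⟩; exact ⟨u n, rfl⟩)
  set L : ℝ := ⨅ n, F (u n) with hL
  have hFL : Filter.Tendsto (fun n => F (u n)) Filter.atTop (nhds L) :=
    tendsto_atTop_ciInf (fun n m hnm => hanti n m hnm) hbdu
  have hLle : ∀ n, L ≤ F (u n) := fun n => ciInf_le hbdu n
  -- Cauchy
  have hcau : CauchySeq u := by
    apply cauchySeq_of_le_tendsto_0 (fun N => 2 * (F (u N) - L) / l)
    · intro n m N hNn hNm
      have h1 := hchain N n hNn
      have h2 := hchain N m hNm
      have hd : dist (u n) (u m) ≤ dist (u n) (u N) + dist (u m) (u N) := by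
        rw [dist_comm (u m) (u N)]; exact dist_triangle _ _ _
      have e1 : l * dist (u n) (u N) ≤ F (u N) - F (u n) := by
        have := h1; simp only [hS, Set.mem_setOf_eq] at this; linarith
      have e2 : l * dist (u m) (u N) ≤ F (u N) - F (u m) := by
        have := h2; simp only [hS, Set.mem_setOf_eq] at this; linarith
      rw [le_div_iff₀ hl0]
      nlinarith [hLle n, hLle m]
    · have : Filter.Tendsto (fun N => 2 * (F (u N) - L) / l) Filter.atTop
          (nhds (2 * (L - L) / l)) := by
        exact (((hFL.sub_const L).const_mul 2).div_const l)
      simpa using this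
  obtain ⟨vθ, hv⟩ := cauchySeq_tendsto_of_complete hcau
  have hclosed : ∀ x, IsClosed (S x) := by
    intro x
    have : S x = {w | F w + l * dist w x ≤ F x} := rfl
    rw [this]
    exact isClosed_le (by continuity) continuous_const
  have hvmem : ∀ n, vθ ∈ S (u n) := by
    intro n
    refine (hclosed (u n)).mem_of_tendsto hv ?_
    filter_upwards [Filter.eventually_ge_atTop n] with m hm
    exact hchain n m hm
  have hFvθ : Filter.Tendsto (fun n => F (u n)) Filter.atTop (nhds (F vθ)) :=
    (hF.continuousAt).tendsto.comp hv
  -- key minimality: if v ∈ S vθ then F vθ ≤ F v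
  have hkey : ∀ v, v ∈ S vθ → F vθ ≤ F v := by
    intro v hvθ
    have hmemn : ∀ n, v ∈ S (u n) := fun n => htrans _ _ _ (hvmem n) hvθ
    have hge : ∀ n, F (u (n+1)) - (1/2:ℝ)^n ≤ F v := by
      intro n
      have h1 : sInf (F '' S (u n)) ≤ F v := csInf_le (hbdd _) ⟨v, hmemn n, rfl⟩
      have h2 := hnext2 n (u n)
      rw [← husucc n] at h2
      linarith
    have htend : Filter.Tendsto (fun n => F (u (n+1)) - (1/2:ℝ)^n)
        Filter.atTop (nhds (F vθ - 0)) := by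
      exact (hFvθ.comp (Filter.tendsto_add_atTop_nat 1)).sub
        (tendsto_pow_atTop_nhds_zero_of_lt_one (by norm_num) (by norm_num))
    have := le_of_tendsto htend (Filter.Eventually.of_forall hge)
    simpa using this
  have hvθv₀ : vθ ∈ S v₀ := by rw [← hu0]; exact hvmem 0
  simp only [hS, Set.mem_setOf_eq] at hvθv₀
  have hd0 : dist vθ v₀ ≥ 0 := dist_nonneg
  refine ⟨vθ, by nlinarith [hl0.le], ?_, ?_⟩
  · have hinf : (⨅ v, F v) ≤ F vθ := ciInf_le hbd vθ
    have : l * dist vθ v₀ ≤ θ := by linarith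
    have hll : l * l = θ := Real.mul_self_sqrt hθ.le
    nlinarith
  · intro v
    by_contra h
    push_neg at h
    have hv' : v ∈ S vθ := by
      simp only [hS, Set.mem_setOf_eq]
      rw [dist_comm]
      linarith
    have := hkey v hv'
    have hd : 0 ≤ dist vθ v := dist_nonneg
    nlinarith
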